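/- arXiv:1308.4659 — 2 statements merged into one kernel-verified Lean document; each statement's English description precedes it below -/
import Mathlib

section
/- Let R be a standard graded K-algebra with an embedding ε and let I be a homogeneous ideal of R in the image of ε. Then the quotient ring R/I has an embedding ε' defined by ε'(J) = π(ε(π^{-1}(J))) for homogeneous ideals J of R/I, where π: R → R/I is the canonical projection. That is, ε' is an order-preserving injection from Hilbert functions of homogeneous ideals of R/I to homogeneous ideals of R/I preserving Hilbert functions. -/
open MvPolynomial
set_option synthInstance.maxHeartbeats 1000000
set_option maxHeartbeats 2000000
noncomputable section

variable (K : Type) [Field K] (n : ℕ)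



/-- The `K`-dimension of the degree-`d` graded component of the homogeneous ideal `J`. -/
noncomputable def idealHF (J : Ideal (MvPolynomial (Fin n) K)) (d : ℕ) : ℕ :=
  Module.finrank K ↥(J.restrictScalars K ⊓ homogeneousSubmodule (Fin n) K d)

/-- An ideal is homogeneous (w.r.t. the standard grading) iff it contains all
homogeneous components of its elements. -/
def IsHomog (J : Ideal (MvPolynomial (Fin n) K)) : Prop :=
  ∀ f ∈ J, ∀ d : ℕ, homogeneousComponent d f ∈ J

/-- The Hilbert function, in degree `d`, of the image of the homogeneous ideal `J ⊇ a`
in the quotient ring `A/a`: the dimension of `(J_d + a_d)/a_d`. -/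
noncomputable def quotHF (a J : Ideal (MvPolynomial (Fin n) K)) (d : ℕ) : ℕ :=
  Module.finrank K ↥(Submodule.map (a.restrictScalars K).mkQ
    (J.restrictScalars K ⊓ homogeneousSubmodule (Fin n) K d))

/-- The Hilbert function of the quotient ring `A/a` itself. -/
noncomputable def ringHF (a : Ideal (MvPolynomial (Fin n) K)) (d : ℕ) : ℕ :=
  Module.finrank K ↥(Submodule.map (a.restrictScalars K).mkQ
    (homogeneousSubmodule (Fin n) K d))

/-- The set of Hilbert functions of homogeneous ideals of `A/a`. -/
def HFset (a : Ideal (MvPolynomial (Fin n) K)) : Set (ℕ → ℕ) :=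
  {H | ∃ J : Ideal (MvPolynomial (Fin n) K), IsHomog K n J ∧ a ≤ J ∧ H = quotHF K n a J}

/-- An embedding of Hilbert functions for the standard graded algebra `A/a`
(ideals of `A/a` being represented by their preimages in `A`):
an assignment `eps` of ideals of `A` containing `a` to Hilbert functions, which
preserves Hilbert functions and the (pointwise, resp. inclusion) orders.  Injectivity
is automatic since `eps H` has Hilbert function `H`. -/
structure HFEmbedding (a : Ideal (MvPolynomial (Fin n) K)) : Type where
  eps : (ℕ → ℕ) → Ideal (MvPolynomial (Fin n) K)
  homog : ∀ J : Ideal (MvPolynomial (Fin n) K), IsHomog K n J → a ≤ J →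
    IsHomog K n (eps (quotHF K n a J))
  le : ∀ J : Ideal (MvPolynomial (Fin n) K), IsHomog K n J → a ≤ J →
    a ≤ eps (quotHF K n a J)
  hf : ∀ J : Ideal (MvPolynomial (Fin n) K), IsHomog K n J → a ≤ J →
    quotHF K n a (eps (quotHF K n a J)) = quotHF K n a J
  mono : ∀ J J' : Ideal (MvPolynomial (Fin n) K), IsHomog K n J → a ≤ J →
    IsHomog K n J' → a ≤ J' → (∀ d, quotHF K n a J d ≤ quotHF K n a J' d) →
    eps (quotHF K n a J) ≤ eps (quotHF K n a J')

/-- A monomial ideal: an ideal generated by monomials. -/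
def IsMonomialIdeal (J : Ideal (MvPolynomial (Fin n) K)) : Prop :=
  ∃ S : Set (Fin n →₀ ℕ), J = Ideal.span ((fun s => monomial s (1 : K)) '' S)

/-- The monomial ideal generated by the set of exponent vectors `S`. -/
def monIdeal (S : Set (Fin n →₀ ℕ)) : Ideal (MvPolynomial (Fin n) K) :=
  Ideal.span ((fun s => monomial s (1 : K)) '' S)

/-- An embedding is monomial if the preimage in `A` of every ideal in its image is
a monomial ideal. -/
def HFEmbedding.IsMonomial {a : Ideal (MvPolynomial (Fin n) K)} (E : HFEmbedding K n a) : Prop :=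
  ∀ J : Ideal (MvPolynomial (Fin n) K), IsHomog K n J → a ≤ J →
    IsMonomialIdeal K n (E.eps (quotHF K n a J))

/-- A distraction of `A = K[X_1,…,X_n]`: an `n × ℕ` matrix of linear forms such that
any transversal choice of one entry from each row spans `A_1`, with rows eventually
constant. -/
structure Distraction : Type where
  l : Fin n → ℕ → MvPolynomial (Fin n) K
  homog : ∀ i j, (l i j).IsHomogeneous 1
  span : ∀ c : Fin n → ℕ,
    Submodule.span K (Set.range fun i => l i (c i)) = homogeneousSubmodule (Fin n) K 1
  eventually : ∃ N : ℕ, ∀ i, ∀ j ≥ N, l i j = l i N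

/-- The distraction of the monomial with exponent vector `s`. -/
def Distraction.distractMon (D : Distraction K n) (s : Fin n →₀ ℕ) :
    MvPolynomial (Fin n) K :=
  ∏ i : Fin n, ∏ j ∈ Finset.range (s i), D.l i j

/-- `b` is the distraction under `D` of the monomial ideal `a`:  `b` is generated by the
distractions of a monomial system of generators of `a`. -/
def IsDistractionOf (b a : Ideal (MvPolynomial (Fin n) K)) (D : Distraction K n) : Prop :=
  ∃ S : Set (Fin n →₀ ℕ), a = monIdeal K n S ∧
    b = Ideal.span (D.distractMon '' S)



/-- Degree-`d` graded piece of the quotient ring `A/J`. -/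
noncomputable def qdeg (J : Ideal (MvPolynomial (Fin n) K)) (d : ℕ) :
    Submodule K (MvPolynomial (Fin n) K ⧸ J) :=
  Submodule.map (Ideal.Quotient.mkₐ K J).toLinearMap (homogeneousSubmodule (Fin n) K d)

/-- The Koszul complex of the sequence `X_1, …, X_n` on `A/J`, all homological degrees at
once: functions from subsets of variables to `A/J`, the summand indexed by `s` being
`(A/J)·e_s` with `e_s` the wedge of the `e_i`, `i ∈ s`. -/
noncomputable def koszulDiff (J : Ideal (MvPolynomial (Fin n) K)) :
    (Finset (Fin n) → MvPolynomial (Fin n) K ⧸ J) →ₗ[K]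
    (Finset (Fin n) → MvPolynomial (Fin n) K ⧸ J) :=
  LinearMap.pi fun s => ∑ k ∈ sᶜ,
    ((-1 : K) ^ (s.filter (fun j => j < k)).card) •
      ((LinearMap.mulLeft K (Ideal.Quotient.mk J (X k))).comp
        (LinearMap.proj (insert k s)))

/-- The piece of the Koszul complex of homological degree `i` and internal degree `j`. -/
noncomputable def koszulGraded (J : Ideal (MvPolynomial (Fin n) K)) (i j : ℕ) :
    Submodule K (Finset (Fin n) → MvPolynomial (Fin n) K ⧸ J) :=
  Submodule.pi Set.univ fun s =>
    if s.card = i ∧ i ≤ j then qdeg K n J (j - i) else ⊥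

/-- The graded Betti number `β^A_{ij}(A/J) = dim_K Tor_i^A(A/J, K)_j`, computed as the
internal degree `j` part of the `i`-th Koszul homology of `A/J`. -/
noncomputable def gradedBetti (J : Ideal (MvPolynomial (Fin n) K)) (i j : ℕ) : ℕ :=
  Module.finrank K ↥(Submodule.map
    (Submodule.mkQ (Submodule.map (koszulDiff K n J) (koszulGraded K n J (i + 1) j)))
    (koszulGraded K n J i j ⊓ LinearMap.ker (koszulDiff K n J)))


section Cech
variable (K : Type) [Field K] {n : ℕ} (R : Type) [CommRing R] [Algebra K R]
  (x : Fin n → R)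

/-- Product of the elements indexed by `T`. -/
def vprod (T : Finset (Fin n)) : R := ∏ i ∈ T, x i

/-- A summand `R_{x_T}` of the (extended) Čech complex of `R` on `x_1, …, x_n`. -/
abbrev cechSummand (T : Finset (Fin n)) : Type :=
  Localization (Submonoid.powers (vprod R x T))

lemma cech_isUnit {S T : Finset (Fin n)} (h : S ⊆ T)
    (y : Submonoid.powers (vprod R x S)) :
    IsUnit (algebraMap R (cechSummand R x T) y) := by
  obtain ⟨k, hk⟩ := y.2
  have hdvd : vprod R x S ∣ vprod R x T :=
    ⟨∏ i ∈ T \ S, x i, by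
      rw [vprod, vprod, ← Finset.prod_union Finset.disjoint_sdiff,
        Finset.union_sdiff_of_subset h]⟩
  obtain ⟨c, hc⟩ := hdvd
  have hS : IsUnit (algebraMap R (cechSummand R x T) (vprod R x S)) := by
    refine isUnit_of_mul_isUnit_left (y := algebraMap R (cechSummand R x T) c) ?_
    rw [← map_mul, ← hc]
    exact IsLocalization.map_units (cechSummand R x T) ⟨vprod R x T, Submonoid.mem_powers _⟩
  have h2 : (y : R) = vprod R x S ^ k := hk.symm
  rw [h2, map_pow]
  exact hS.pow k

/-- The localization map between Čech summands, for `S ⊆ T`. -/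
def cechRes {S T : Finset (Fin n)} (h : S ⊆ T) :
    cechSummand R x S →ₗ[K] cechSummand R x T :=
  { toFun := IsLocalization.lift (M := Submonoid.powers (vprod R x S))
      (g := algebraMap R (cechSummand R x T)) (cech_isUnit R x h)
    map_add' := fun a b => map_add _ a b
    map_smul' := by
      intro c a
      simp only [RingHom.id_apply]
      rw [Algebra.smul_def, map_mul, Algebra.smul_def]
      congr 1
      rw [IsScalarTower.algebraMap_apply K R (cechSummand R x S) c,
        IsLocalization.lift_eq, ← IsScalarTower.algebraMap_apply] }

/-- The total space of the (extended) Čech complex. -/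
abbrev cechSpace : Type := ∀ T : Finset (Fin n), cechSummand R x T

/-- The Čech differential (all cohomological degrees at once). -/
def cechDiff : cechSpace R x →ₗ[K] cechSpace R x :=
  LinearMap.pi fun T => ∑ k ∈ T.attach,
    ((-1 : K) ^ ((T.1.erase k.1).filter (fun j => j < k.1)).card) •
      ((cechRes K R x (Finset.erase_subset k.1 T)).comp
        (LinearMap.proj (T.erase k.1)))

variable (deg : ℕ → Submodule K R)

/-- The degree-`j` graded piece of `R_{x_T}` (for `x_i` of degree one): spanned by
fractions `m / x_T^k` with `m` homogeneous of degree `j + k·|T|`. -/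
def cechSummandDeg (T : Finset (Fin n)) (j : ℤ) : Submodule K (cechSummand R x T) :=
  Submodule.span K { y | ∃ (k : ℕ) (m : R) (d : ℕ),
    (d : ℤ) = j + k * T.card ∧ m ∈ deg d ∧
    y = Localization.mk m ⟨vprod R x T ^ k, pow_mem (Submonoid.mem_powers _) k⟩ }

/-- The piece of the Čech complex of cohomological degree `i` and internal degree `j`. -/
def cechGraded (i : ℕ) (j : ℤ) : Submodule K (cechSpace R x) :=
  Submodule.pi Set.univ fun T => if T.card = i then cechSummandDeg K R x deg T j else ⊥

/-- The dimension of the degree-`j` piece of the `i`-th cohomology of the (extended)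
Čech complex of `R` on `x`. -/
def cechHilb (i : ℕ) (j : ℤ) : ℕ :=
  Module.finrank K ↥(Submodule.map
    (Submodule.mkQ (Submodule.map (cechDiff K R x) (cechGraded K R x deg (i - 1) j)))
    (cechGraded K R x deg i j ⊓ LinearMap.ker (cechDiff K R x)))

end Cech


variable (K : Type) [Field K] (n : ℕ)

/-- `dim_K H^i_m(A/J)_j`: the degree-`j` part of the `i`-th local cohomology of `A/J`
supported at the graded maximal ideal `m = (X_1,…,X_n)`, computed via the (extended)
Čech complex of `A/J` on the variables. -/
noncomputable def lcHilb (J : Ideal (MvPolynomial (Fin n) K)) (i : ℕ) (j : ℤ) : ℕ :=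
  cechHilb K (MvPolynomial (Fin n) K ⧸ J)
    (fun v => Ideal.Quotient.mk J (MvPolynomial.X v)) (qdeg K n J) i j

/-- A lex-segment ideal: a monomial ideal which, in each degree, is spanned by an
initial segment of monomials in the lexicographic order (with `X_1 > X_2 > ⋯`). -/
def IsLexIdeal (J : Ideal (MvPolynomial (Fin n) K)) : Prop :=
  IsMonomialIdeal K n J ∧ ∀ s t : Fin n →₀ ℕ,
    (s.sum fun _ e => e) = (t.sum fun _ e => e) →
    monomial s (1 : K) ∈ J →
    (∃ i : Fin n, (∀ v : Fin n, v < i → s v = t v) ∧ s i < t i) →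
    monomial t (1 : K) ∈ J

/-- `E` is the lex-embedding of `A/a`: the image of `E` consists exactly of the images
in `A/a` of lex-segment ideals of `A`. -/
def IsLexEmbedding {a : Ideal (MvPolynomial (Fin n) K)} (E : HFEmbedding K n a) : Prop :=
  (∀ J : Ideal (MvPolynomial (Fin n) K), IsHomog K n J → a ≤ J →
    ∃ L', IsLexIdeal K n L' ∧ E.eps (quotHF K n a J) = a ⊔ L') ∧
  (∀ L' : Ideal (MvPolynomial (Fin n) K), IsLexIdeal K n L' →
    E.eps (quotHF K n a (a ⊔ L')) = a ⊔ L')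

/-- `A/a` has the lex-embedding, i.e. `A/a` is Macaulay-lex. -/
def HasLexEmbedding (a : Ideal (MvPolynomial (Fin n) K)) : Prop :=
  ∃ E : HFEmbedding K n a, IsLexEmbedding K n E

/-- A piecewise lex-segment ideal: a sum of extensions to `A` of lex-segment ideals of
the subrings `K[X_1,…,X_i]`. -/
def IsPiecewiseLex (L : Ideal (MvPolynomial (Fin n) K)) : Prop :=
  ∃ Ls : Fin n → Ideal (MvPolynomial (Fin n) K),
    L = ⨆ i, Ls i ∧ ∀ i : Fin n,
      ∃ L0 : Ideal (MvPolynomial (Fin ((i : ℕ) + 1)) K),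
        IsLexIdeal K ((i : ℕ) + 1) L0 ∧
        Ls i = Ideal.map
          (rename (Fin.castLE i.isLt) :
            MvPolynomial (Fin ((i : ℕ) + 1)) K →ₐ[K] MvPolynomial (Fin n) K) L0

/-- A pure powers ideal `(X_1^{d_1}, …, X_r^{d_r})` with `d_1 ≤ ⋯ ≤ d_r`. -/
def IsPurePowers (P : Ideal (MvPolynomial (Fin n) K)) : Prop :=
  ∃ (r : ℕ) (hr : r ≤ n) (d : Fin r → ℕ), Monotone d ∧
    P = Ideal.span (Set.range fun i : Fin r => X (Fin.castLE hr i) ^ d i)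

/-- A Shakin ideal: the sum of a piecewise lex-segment ideal and a pure powers ideal. -/
def IsShakin (a : Ideal (MvPolynomial (Fin n) K)) : Prop :=
  ∃ L P : Ideal (MvPolynomial (Fin n) K),
    IsPiecewiseLex K n L ∧ IsPurePowers K n P ∧ a = L ⊔ P

/-- `(A/b, A/a, E)` is Betti extremal. -/
def IsBettiExtremalPair (b a : Ideal (MvPolynomial (Fin n) K)) (E : HFEmbedding K n a) :
    Prop :=
  ∀ J : Ideal (MvPolynomial (Fin n) K), IsHomog K n J → b ≤ J → ∀ i j : ℕ,
    gradedBetti K n J i j ≤ gradedBetti K n (E.eps (quotHF K n b J)) i j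

/-- `(A/b, A/a, E)` is (local) cohomology extremal. -/
def IsCohomologyExtremalPair (b a : Ideal (MvPolynomial (Fin n) K))
    (E : HFEmbedding K n a) : Prop :=
  ∀ J : Ideal (MvPolynomial (Fin n) K), IsHomog K n J → b ≤ J → ∀ (i : ℕ) (j : ℤ),
    lcHilb K n J i j ≤ lcHilb K n (E.eps (quotHF K n b J)) i j

/-- The embedding `E_D` of `A/b` is the one induced by the distraction `D` and the
lex-embedding `E` of `A/a`: it sends each Hilbert function to the image of the
distraction of the corresponding a-plus-lex ideal. -/
def IsInducedByDistraction {b a : Ideal (MvPolynomial (Fin n) K)}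
    (E_D : HFEmbedding K n b) (E : HFEmbedding K n a) (D : Distraction K n) : Prop :=
  ∀ J : Ideal (MvPolynomial (Fin n) K), IsHomog K n J → b ≤ J →
    ∃ L', IsLexIdeal K n L' ∧ E.eps (quotHF K n b J) = a ⊔ L' ∧
      IsDistractionOf K n (E_D.eps (quotHF K n b J)) (a ⊔ L') D

/-- An `X_n`-stable ideal of `R = (Ā/ā)[X_n]` (ideals represented by their preimages in
`A = K[X_1,…,X_{n+1}]`, with `Ā = K[X_1,…,X_n]` and `X_n` the last variable):
`I = ⊕_d J_{[d]} X_n^d` with each `J_{[d]}` an ideal of `Ā` containing `ā` and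
`J_{[d+1]}·m_R ⊆ J_{[d]}`. -/
def IsXnStable (abar : Ideal (MvPolynomial (Fin n) K))
    (I : Ideal (MvPolynomial (Fin (n + 1)) K)) : Prop :=
  ∃ Js : ℕ → Ideal (MvPolynomial (Fin n) K),
    (∀ d, IsHomog K n (Js d) ∧ abar ≤ Js d) ∧
    (∀ d, Js d ≤ Js (d + 1)) ∧
    (∀ d (v : Fin n), ∀ f ∈ Js (d + 1), X v * f ∈ Js d) ∧
    I = ⨆ d : ℕ, Ideal.map
        (rename Fin.castSucc : MvPolynomial (Fin n) K →ₐ[K] MvPolynomial (Fin (n + 1)) K)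
        (Js d) * Ideal.span {X (Fin.last n) ^ d}


/-- The extension `āA` of an ideal `ā ⊆ K[X_1,…,X_n]` to `A = K[X_1,…,X_{n+1}]`
(so that `A/āA ≅ (Ā/ā)[X_{n+1}]`). -/
noncomputable def extIdeal (abar : Ideal (MvPolynomial (Fin n) K)) :
    Ideal (MvPolynomial (Fin (n + 1)) K) :=
  Ideal.map
    (rename Fin.castSucc : MvPolynomial (Fin n) K →ₐ[K] MvPolynomial (Fin (n + 1)) K)
    abar

/-- The ideal `(X_{n+1}^e)`, with `e ∈ ℕ ∪ {∞}` (`none = ∞`, giving the zero ideal). -/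
noncomputable def powIdealOpt (e : Option ℕ) : Ideal (MvPolynomial (Fin (n + 1)) K) :=
  e.elim ⊥ fun k => Ideal.span {X (Fin.last n) ^ k}



section Aux
variable (K : Type) [Field K] (n : ℕ)

instance aux_fd (d : ℕ) : FiniteDimensional K (homogeneousSubmodule (Fin n) K d) :=
  Submodule.finiteDimensional_of_le (S₂ := restrictTotalDegree (Fin n) K d)
    (fun p hp => (mem_restrictTotalDegree _ _ _).mpr
      (((mem_homogeneousSubmodule d p).mp hp).totalDegree_le))

lemma aux_key1 (I J : Ideal (MvPolynomial (Fin n) K)) (hIJ : I ≤ J) (d : ℕ) :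
    quotHF K n I J d + idealHF K n I d = idealHF K n J d := by
  set h := homogeneousSubmodule (Fin n) K d with hh
  set M := J.restrictScalars K ⊓ h with hM
  haveI : FiniteDimensional K M := Submodule.finiteDimensional_of_le inf_le_right
  set f := ((I.restrictScalars K).mkQ).comp M.subtype with hf
  have hrange : LinearMap.range f = Submodule.map (I.restrictScalars K).mkQ M := by
    rw [hf, LinearMap.range_comp, Submodule.range_subtype]
  have hker : LinearMap.ker f = Submodule.comap M.subtype (I.restrictScalars K) := by
    rw [hf, LinearMap.ker_comp, Submodule.ker_mkQ]
  have hIJ' : I.restrictScalars K ⊓ J.restrictScalars K = I.restrictScalars K :=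
    inf_eq_left.mpr (fun x hx => hIJ hx)
  have hIM : I.restrictScalars K ⊓ M = I.restrictScalars K ⊓ h := by
    rw [hM, ← inf_assoc, hIJ']
  have hkerrank : Module.finrank K (LinearMap.ker f)
      = Module.finrank K (I.restrictScalars K ⊓ h : Submodule K _) := by
    rw [hker, ← Submodule.finrank_map_subtype_eq M, Submodule.map_comap_subtype,
      inf_comm M, hIM]
  have hrn := LinearMap.finrank_range_add_finrank_ker f
  rw [hrange, hkerrank] at hrn
  simpa [quotHF, idealHF] using hrn

lemma aux_mono (a b : Ideal (MvPolynomial (Fin n) K)) (hab : a ≤ b) (d : ℕ) :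
    idealHF K n a d ≤ idealHF K n b d := by
  haveI : FiniteDimensional K
      (b.restrictScalars K ⊓ homogeneousSubmodule (Fin n) K d : Submodule K _) :=
    Submodule.finiteDimensional_of_le inf_le_right
  exact Submodule.finrank_mono (inf_le_inf_right _ (fun x hx => hab hx))

lemma aux_key3 (a b J : Ideal (MvPolynomial (Fin n) K)) (hab : a ≤ b) (hbJ : b ≤ J)
    (d : ℕ) : quotHF K n b J d + quotHF K n a b d = quotHF K n a J d := by
  have h1 := aux_key1 K n a J (hab.trans hbJ) d
  have h2 := aux_key1 K n b J hbJ d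
  have h3 := aux_key1 K n a b hab d
  have h4 := aux_mono K n a b hab d
  omega

end Aux

/-- a quotient of a ring with an embedding by an embedded ideal has the
induced embedding `ε'(J) = π(ε(π⁻¹(J)))` (ideals of quotients of `A` being represented
by their preimages in `A`). -/
theorem quotient_has_induced_embedding (a b : Ideal (MvPolynomial (Fin n) K))
    (ha : IsHomog K n a) (E : HFEmbedding K n a) (hb : IsHomog K n b) (hab : a ≤ b)
    (hemb : E.eps (quotHF K n a b) = b) :
    ∃ E' : HFEmbedding K n b, ∀ J : Ideal (MvPolynomial (Fin n) K),
      IsHomog K n J → b ≤ J → E'.eps (quotHF K n b J) = E.eps (quotHF K n a J) := by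
  have key : ∀ J : Ideal (MvPolynomial (Fin n) K), b ≤ J →
      (fun d => quotHF K n b J d + quotHF K n a b d) = quotHF K n a J := by
    intro J hbJ
    funext d
    exact aux_key3 K n a b J hab hbJ d
  have hle : ∀ J : Ideal (MvPolynomial (Fin n) K), IsHomog K n J → b ≤ J →
      b ≤ E.eps (quotHF K n a J) := by
    intro J hJ hbJ
    calc b = E.eps (quotHF K n a b) := hemb.symm
      _ ≤ E.eps (quotHF K n a J) := by
          refine E.mono b J hb hab hJ (hab.trans hbJ) (fun d => ?_)
          have := aux_key3 K n a b J hab hbJ d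
          omega
  refine ⟨{ eps := fun H => E.eps (fun d => H d + quotHF K n a b d)
            homog := ?_, le := ?_, hf := ?_, mono := ?_ }, ?_⟩
  · intro J hJ hbJ
    simpa only [key J hbJ] using E.homog J hJ (hab.trans hbJ)
  · intro J hJ hbJ
    simpa only [key J hbJ] using hle J hJ hbJ
  · intro J hJ hbJ
    simp only [key J hbJ]
    set L := E.eps (quotHF K n a J) with hL
    have haJ : a ≤ J := hab.trans hbJ
    have hbL : b ≤ L := hle J hJ hbJ
    have hfL : quotHF K n a L = quotHF K n a J := E.hf J hJ haJ
    funext d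
    have h1 := aux_key3 K n a b L hab hbL d
    have h2 := aux_key3 K n a b J hab hbJ d
    rw [hfL] at h1
    omega
  · intro J J' hJ hbJ hJ' hbJ' hmono
    simp only [key J hbJ, key J' hbJ']
    refine E.mono J J' hJ (hab.trans hbJ) hJ' (hab.trans hbJ') (fun d => ?_)
    have h1 := aux_key3 K n a b J hab hbJ d
    have h2 := aux_key3 K n a b J' hab hbJ' d
    have := hmono d
    omega
  · intro J hJ hbJ
    simp only [key J hbJ]

end
end

section
/- Let a be a monomial ideal of A = K[X_1,...,X_n] and D a distraction of A. Then the ideal D(a), generated by the distractions of a monomial generating set of a, has the same Hilbert function as a: Hilb(A/a) = Hilb(A/D(a)). -/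
open MvPolynomial
set_option synthInstance.maxHeartbeats 1000000
set_option maxHeartbeats 2000000
noncomputable section

variable (K : Type) [Field K] (n : ℕ)



variable (K : Type) [Field K] (n : ℕ)

/-!
Extend `X^u ↦ D(X^u)` linearly to a `K`-linear endomorphism `Φ` of `A` (`distractLinearMap`).
Each `X_k` is a combination of the forms `l_{i,u_i}`, so `X_k · D(X^u)` is a combination of the
`D(X^{u+e_i})`. Hence the `K`-span of the distractions of an upper set of exponents is already
an ideal: this gives `Φ(a) = D(a)`, and (taking all exponents) that the distractions of the
degree-`d` monomials span `A_d`. So `Φ` maps each finite-dimensional `A_d` onto itself, hence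
is a graded linear automorphism of `A` carrying `a` onto `D(a)`, and it induces
`A/a ≅ A/D(a)` degree by degree.
-/

theorem finrank_map_mkQ_eq_of_linearEquiv {R M N : Type*} [Ring R] [AddCommGroup M]
    [Module R M] [AddCommGroup N] [Module R N] (e : M ≃ₗ[R] N)
    {P V : Submodule R M} {Q W : Submodule R N}
    (hP : P.map (e : M →ₗ[R] N) = Q) (hV : V.map (e : M →ₗ[R] N) = W) :
    Module.finrank R (V.map P.mkQ) = Module.finrank R (W.map Q.mkQ) := by
  rw [← (Submodule.Quotient.equiv P Q e hP).finrank_map_eq, ← Submodule.map_comp, ← hV,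
    ← Submodule.map_comp]
  rfl

theorem restrictScalars_span_monomial_image {σ R : Type*} [CommSemiring R]
    (S : Set (σ →₀ ℕ)) :
    (Ideal.span ((fun s => monomial s (1 : R)) '' S)).restrictScalars R =
      restrictSupport R (upperClosure S : Set (σ →₀ ℕ)) := by
  ext f
  simp only [Submodule.restrictScalars_mem, mem_ideal_span_monomial_image,
    mem_restrictSupport_iff, Set.subset_def, SetLike.mem_coe, mem_upperClosure]

theorem injective_of_map_homogeneousSubmodule_eq {σ F : Type*} [Finite σ] [Field F]
    (φ : MvPolynomial σ F →ₗ[F] MvPolynomial σ F)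
    (hcomm : ∀ d f, homogeneousComponent d (φ f) = φ (homogeneousComponent d f))
    (hmap : ∀ d, (homogeneousSubmodule σ F d).map φ = homogeneousSubmodule σ F d) :
    Function.Injective φ := by
  refine (injective_iff_map_eq_zero φ).mpr fun f hf => ?_
  have hcomp : ∀ d, homogeneousComponent d f = 0 := by
    intro d
    have : Module.Finite F (homogeneousSubmodule σ F d) :=
      Module.Finite.iff_fg.mpr (homogeneousSubmodule_fg σ F d)
    let φd := φ.restrict fun x hx => hmap d ▸ Submodule.mem_map_of_mem hx
    have hsurj : Function.Surjective φd := by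
      rintro ⟨y, hy⟩
      obtain ⟨x, hx, rfl⟩ := (hmap d).symm ▸ hy
      exact ⟨⟨x, hx⟩, rfl⟩
    have h0 : φd ⟨_, homogeneousComponent_isHomogeneous d f⟩ = φd 0 :=
      Subtype.ext (by simp [φd, ← hcomm, hf])
    exact congrArg Subtype.val (LinearMap.injective_iff_surjective.mpr hsurj h0)
  ext u
  have := congrArg (coeff u) (hcomp u.degree)
  rwa [coeff_homogeneousComponent, if_pos rfl] at this

namespace Distraction

variable {K n} (D : Distraction K n)

theorem isHomogeneous_distractMon (u : Fin n →₀ ℕ) :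
    (distractMon K n D u).IsHomogeneous u.degree := by
  rw [Finsupp.degree_eq_sum]
  refine IsHomogeneous.prod _ _ _ fun i _ => ?_
  simpa using IsHomogeneous.prod (Finset.range (u i)) _ (fun _ => 1) fun j _ => D.homog i j

theorem distractMon_add (s t : Fin n →₀ ℕ) :
    distractMon K n D (s + t) =
      distractMon K n D s * ∏ i, ∏ j ∈ Finset.range (t i), D.l i (s i + j) := by
  simp only [distractMon, Finsupp.add_apply, Finset.prod_range_add, Finset.prod_mul_distrib]

theorem distractMon_add_single (u : Fin n →₀ ℕ) (k : Fin n) :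
    distractMon K n D (u + Finsupp.single k 1) = D.l k (u k) * distractMon K n D u := by
  rw [distractMon_add, mul_comm, Fintype.prod_eq_single k fun i hi => by simp [Ne.symm hi]]
  simp

theorem distractMon_zero : distractMon K n D 0 = 1 := by
  simp [distractMon]

theorem distractMon_dvd_distractMon {s u : Fin n →₀ ℕ} (h : s ≤ u) :
    distractMon K n D s ∣ distractMon K n D u := by
  obtain ⟨t, rfl⟩ := exists_add_of_le h
  exact Dvd.intro _ (D.distractMon_add s t).symm

theorem X_mul_distractMon_mem_span (k : Fin n) (u : Fin n →₀ ℕ) :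
    X k * distractMon K n D u ∈
      Submodule.span K (Set.range fun i => distractMon K n D (u + Finsupp.single i 1)) := by
  have hX : (X k : MvPolynomial (Fin n) K) ∈
      Submodule.span K (Set.range fun i => D.l i (u i)) := by
    rw [D.span]
    exact isHomogeneous_X K k
  obtain ⟨c, hc⟩ := Submodule.mem_span_range_iff_exists_fun K |>.mp hX
  refine Submodule.mem_span_range_iff_exists_fun K |>.mpr ⟨c, ?_⟩
  simp only [← hc, Finset.sum_mul, smul_mul_assoc, distractMon_add_single]

variable {U : Set (Fin n →₀ ℕ)} {f : MvPolynomial (Fin n) K}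

theorem X_mul_mem_span_distractMon (hU : IsUpperSet U) (k : Fin n)
    (hf : f ∈ Submodule.span K (distractMon K n D '' U)) :
    X k * f ∈ Submodule.span K (distractMon K n D '' U) := by
  refine (Submodule.map_span_le (LinearMap.mulLeft K (X k)) _ _).mpr ?_ ⟨f, hf, rfl⟩
  rintro _ ⟨u, hu, rfl⟩
  refine Submodule.span_mono ?_ (D.X_mul_distractMon_mem_span k u)
  rintro _ ⟨i, rfl⟩
  exact ⟨_, hU le_self_add hu, rfl⟩

theorem mul_mem_span_distractMon (hU : IsUpperSet U) (p : MvPolynomial (Fin n) K)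
    (hf : f ∈ Submodule.span K (distractMon K n D '' U)) :
    p * f ∈ Submodule.span K (distractMon K n D '' U) := by
  induction p using MvPolynomial.induction_on generalizing f with
  | C a => simpa [C_mul'] using Submodule.smul_mem _ a hf
  | add p q hp hq => simpa [add_mul] using Submodule.add_mem _ (hp hf) (hq hf)
  | mul_X p k hp => simpa [mul_assoc] using hp (D.X_mul_mem_span_distractMon hU k hf)

theorem restrictScalars_ideal_span_distractMon (hU : IsUpperSet U) :
    (Ideal.span (distractMon K n D '' U)).restrictScalars K =
      Submodule.span K (distractMon K n D '' U) := by
  let I : Ideal (MvPolynomial (Fin n) K) :=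
    { Submodule.span K (distractMon K n D '' U) with
      smul_mem' := fun p _ hf => D.mul_mem_span_distractMon hU p hf }
  exact le_antisymm ((Ideal.span_le (I := I)).mpr Submodule.subset_span)
    (Submodule.span_le_restrictScalars K _ _)

theorem ideal_span_distractMon_upperClosure (S : Set (Fin n →₀ ℕ)) :
    Ideal.span (distractMon K n D '' upperClosure S) = Ideal.span (distractMon K n D '' S) := by
  refine le_antisymm (Ideal.span_le.mpr ?_)
    (Ideal.span_mono (Set.image_mono subset_upperClosure))
  rintro _ ⟨u, ⟨s, hs, hsu⟩, rfl⟩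
  exact Ideal.mem_of_dvd _ (D.distractMon_dvd_distractMon hsu) (Ideal.subset_span ⟨s, hs, rfl⟩)

theorem span_distractMon_range : Submodule.span K (Set.range (distractMon K n D)) = ⊤ := by
  refine eq_top_iff.mpr fun p _ => ?_
  rw [← Set.image_univ]
  simpa [distractMon_zero] using D.mul_mem_span_distractMon isUpperSet_univ p
    (Submodule.subset_span ⟨0, trivial, rfl⟩)

theorem homogeneousComponent_mem_span_distractMon (d : ℕ)
    (hf : f ∈ Submodule.span K (distractMon K n D '' U)) :
    homogeneousComponent d f ∈
      Submodule.span K (distractMon K n D '' (U ∩ {u | u.degree = d})) := by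
  refine (Submodule.map_span_le (homogeneousComponent d) _ _).mpr ?_ ⟨f, hf, rfl⟩
  rintro _ ⟨u, hu, rfl⟩
  rw [homogeneousComponent_of_mem (D.isHomogeneous_distractMon u)]
  split_ifs with h
  · exact Submodule.subset_span ⟨u, ⟨hu, h.symm⟩, rfl⟩
  · exact Submodule.zero_mem _

theorem span_distractMon_degree (d : ℕ) :
    Submodule.span K (distractMon K n D '' {u | u.degree = d}) =
      homogeneousSubmodule (Fin n) K d := by
  refine le_antisymm (Submodule.span_le.mpr ?_) fun p hp => ?_
  · rintro _ ⟨u, rfl, rfl⟩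
    exact D.isHomogeneous_distractMon u
  · have h := D.homogeneousComponent_mem_span_distractMon (U := Set.univ) (f := p) d
      (by rw [Set.image_univ, D.span_distractMon_range]; exact Submodule.mem_top)
    rwa [homogeneousComponent_of_mem hp, if_pos rfl, Set.univ_inter] at h

def distractLinearMap : MvPolynomial (Fin n) K →ₗ[K] MvPolynomial (Fin n) K :=
  (basisMonomials (Fin n) K).constr K (distractMon K n D)

theorem distractLinearMap_monomial (u : Fin n →₀ ℕ) :
    D.distractLinearMap (monomial u 1) = distractMon K n D u := by
  simpa [distractLinearMap] using
    (basisMonomials (Fin n) K).constr_basis K (distractMon K n D) u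

theorem map_distractLinearMap_restrictSupport (U : Set (Fin n →₀ ℕ)) :
    (restrictSupport K U).map D.distractLinearMap =
      Submodule.span K (distractMon K n D '' U) := by
  rw [restrictSupport_eq_span, Submodule.map_span, ← Set.image_comp]
  simp only [Function.comp_def, distractLinearMap_monomial]

theorem map_distractLinearMap_homogeneousSubmodule (d : ℕ) :
    (homogeneousSubmodule (Fin n) K d).map D.distractLinearMap =
      homogeneousSubmodule (Fin n) K d := by
  conv_lhs => rw [homogeneousSubmodule_eq_finsupp_supported]
  exact (D.map_distractLinearMap_restrictSupport _).trans (D.span_distractMon_degree d)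

theorem homogeneousComponent_distractLinearMap (d : ℕ) (f : MvPolynomial (Fin n) K) :
    homogeneousComponent d (D.distractLinearMap f) =
      D.distractLinearMap (homogeneousComponent d f) := by
  have h : (homogeneousComponent d).comp D.distractLinearMap =
      D.distractLinearMap.comp (homogeneousComponent d) := by
    refine (basisMonomials (Fin n) K).ext fun u => ?_
    simp only [coe_basisMonomials, LinearMap.comp_apply, distractLinearMap_monomial,
      homogeneousComponent_of_mem (D.isHomogeneous_distractMon u),
      homogeneousComponent_of_mem (isHomogeneous_monomial (1 : K) rfl)]
    split_ifs <;> simp [distractLinearMap_monomial]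
  exact LinearMap.congr_fun h f

theorem distractLinearMap_surjective : Function.Surjective D.distractLinearMap := by
  rw [← LinearMap.range_eq_top, eq_top_iff, ← D.span_distractMon_range, ← Set.image_univ,
    ← map_distractLinearMap_restrictSupport]
  exact LinearMap.map_le_range

def distractEquiv : MvPolynomial (Fin n) K ≃ₗ[K] MvPolynomial (Fin n) K :=
  LinearEquiv.ofBijective D.distractLinearMap
    ⟨injective_of_map_homogeneousSubmodule_eq _ D.homogeneousComponent_distractLinearMap
      D.map_distractLinearMap_homogeneousSubmodule, D.distractLinearMap_surjective⟩

theorem map_distractEquiv_monIdeal (S : Set (Fin n →₀ ℕ)) :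
    ((monIdeal K n S).restrictScalars K).map (D.distractEquiv : _ →ₗ[K] _) =
      (Ideal.span (distractMon K n D '' S)).restrictScalars K := by
  rw [monIdeal, restrictScalars_span_monomial_image, ← ideal_span_distractMon_upperClosure,
    restrictScalars_ideal_span_distractMon _ (upperClosure S).upper]
  exact D.map_distractLinearMap_restrictSupport _

end Distraction

/-- a distraction of a monomial ideal has the same Hilbert function. -/
theorem distraction_preserves_hilbert (a b : Ideal (MvPolynomial (Fin n) K))
    (D : Distraction K n) (h : IsDistractionOf K n b a D) :
    ∀ d : ℕ, ringHF K n a d = ringHF K n b d := by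
  obtain ⟨S, rfl, rfl⟩ := h
  intro d
  exact finrank_map_mkQ_eq_of_linearEquiv D.distractEquiv
    (D.map_distractEquiv_monIdeal S) (D.map_distractLinearMap_homogeneousSubmodule d)
end
end
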